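/- arXiv:2102.13486 — 2 statements merged into one kernel-verified Lean document; each statement's English description precedes it below -/
import Mathlib

section
/- Every projection band F in a vector lattice E has the b-property in E. -/
/-!
Decompose the bound as `e = y + z` with `y ∈ F` and `z ⊥ F`; then `y` bounds every `x ∈ F` with
`x ≤ e`: the element `(x - y)⁺` lies in `F` (by solidity) and below `|z|`, so it is disjoint from
itself and vanishes.
-/

universe u

section LatticeOrderedGroup

variable {E : Type*} [AddCommGroup E] [Lattice E] [AddLeftMono E]

lemma posPart_le_abs (a : E) : a⁺ ≤ |a| :=
  sup_le (le_abs_self a) (abs_nonneg a)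

lemma abs_posPart_le_abs (a : E) : |a⁺| ≤ |a| := by
  rw [abs_of_nonneg (posPart_nonneg a)]
  exact posPart_le_abs a

lemma le_of_le_add_of_disjoint_posPart {a b z : E} (h : a ≤ b + z)
    (hdisj : |z| ⊓ |(a - b)⁺| = 0) : a ≤ b := by
  rw [abs_of_nonneg (posPart_nonneg _)] at hdisj
  have hle : (a - b)⁺ ≤ |z| :=
    (posPart_mono (sub_le_iff_le_add'.mpr h)).trans (posPart_le_abs z)
  rw [← sub_nonpos, ← posPart_eq_zero, ← hdisj, inf_eq_right.mpr hle]

end LatticeOrderedGroup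

theorem projection_band_has_b_property_general
    {E : Type u} [AddCommGroup E] [Lattice E]
    [CovariantClass E E (· + ·) (· ≤ ·)] [Module ℝ E]
    (F : Submodule ℝ E) (hsolid : ∀ x y : E, |y| ≤ |x| → x ∈ F → y ∈ F)
    (hproj : ∀ x : E, ∃ y ∈ F, ∃ z : E, (∀ f ∈ F, |z| ⊓ |f| = 0) ∧ x = y + z)
    {ι : Type u}
    (x : ι → E) (hxF : ∀ i, x i ∈ F)
    (e : E) (hbdd : ∀ i, x i ≤ e) :
    ∃ f ∈ F, ∀ i, x i ≤ f := by
  obtain ⟨y, hyF, z, hz, rfl⟩ := hproj e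
  refine ⟨y, hyF, fun i => le_of_le_add_of_disjoint_posPart (hbdd i) (hz _ ?_)⟩
  exact hsolid _ _ (abs_posPart_le_abs _) (F.sub_mem (hxF i) hyF)

/-- Every projection band `F` in a vector lattice `E` has the b-property in `E`. -/
theorem projection_band_has_b_property
    {E : Type u} [AddCommGroup E] [Lattice E]
    [CovariantClass E E (· + ·) (· ≤ ·)] [Module ℝ E]
    (arch : ∀ x y : E, (∀ n : ℕ, n • x ≤ y) → x ≤ 0)
    (F : Submodule ℝ E) (hsolid : ∀ x y : E, |y| ≤ |x| → x ∈ F → y ∈ F)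
    (hband : ∀ A : Set E, A ⊆ (F : Set E) → ∀ a : E, IsLUB A a → a ∈ F)
    (hproj : ∀ x : E, ∃ y ∈ F, ∃ z : E, (∀ f ∈ F, |z| ⊓ |f| = 0) ∧ x = y + z)
    {ι : Type u} [Preorder ι] [Nonempty ι] [IsDirected ι (· ≤ ·)]
    (x : ι → E) (hxF : ∀ i, x i ∈ F) (hx0 : ∀ i, 0 ≤ x i) (hmono : Monotone x)
    (e : E) (hbdd : ∀ i, x i ≤ e) :
    ∃ f ∈ F, ∀ i, x i ≤ f :=
  projection_band_has_b_property_general F hsolid hproj x hxF e hbdd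
end

section
/- Let F be an order dense sublattice of a vector lattice E. Then F has the b-property in E if and only if F is majorizing in E. -/
/-!
If `F` is majorizing, a net bounded by `e` is bounded by any `f ∈ F` above `e`. Conversely, by
the b-property the directed set `F ∩ [0, e]` has an upper bound `f ∈ F`. Were `e ≰ f`, order
density would give `0 < g ∈ F` below `e - e ⊓ f`; then inductively every multiple `n • g` lies in
`F ∩ [0, e]`, hence below `e ⊓ f`, so `(n + 1) • g ≤ e`, contradicting the Archimedean property.
-/

universe u

section

variable {E : Type u} [Zero E] [Preorder E]

def IsOrderDense (S : Set E) : Prop :=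
  ∀ e : E, 0 < e → ∃ f ∈ S, 0 < f ∧ f ≤ e

def IsMajorizing (S : Set E) : Prop :=
  ∀ e : E, 0 ≤ e → ∃ f ∈ S, e ≤ f

def HasBProperty (S : Set E) : Prop :=
  ∀ (ι : Type u) [Preorder ι] [Nonempty ι] [IsDirected ι (· ≤ ·)] (x : ι → E),
    (∀ i, x i ∈ S) → (∀ i, 0 ≤ x i) → Monotone x → (∃ e : E, ∀ i, x i ≤ e) → ∃ f ∈ S, ∀ i, x i ≤ f

theorem IsMajorizing.hasBProperty {S : Set E} (hmaj : IsMajorizing S) : HasBProperty S := by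
  intro ι _ i _ x _ hx0 _ ⟨e, he⟩
  obtain ⟨f, hfS, hef⟩ := hmaj e ((hx0 i.some).trans (he i.some))
  exact ⟨f, hfS, fun j ↦ (he j).trans hef⟩

end

section

variable {E : Type u} [AddCommGroup E] [Lattice E] [CovariantClass E E (· + ·) (· ≤ ·)]

theorem nsmul_le_of_forall_mem_Icc_le (S : AddSubmonoid E) {e f g : E} (he : 0 ≤ e)
    (hf : ∀ d ∈ S, d ∈ Set.Icc 0 e → d ≤ f) (hgS : g ∈ S) (hg0 : 0 ≤ g) (hg : g ≤ e - e ⊓ f)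
    (n : ℕ) : n • g ≤ e := by
  induction n with
  | zero => simpa using he
  | succ n ih =>
    have hn : n • g ≤ e ⊓ f :=
      le_inf ih (hf _ (S.nsmul_mem hgS n) ⟨nsmul_nonneg hg0 n, ih⟩)
    calc (n + 1) • g = n • g + g := succ_nsmul g n
      _ ≤ e ⊓ f + (e - e ⊓ f) := add_le_add hn hg
      _ = e := add_sub_cancel _ _

theorem le_of_forall_mem_Icc_le (arch : ∀ x y : E, (∀ n : ℕ, n • x ≤ y) → x ≤ 0)
    (S : AddSubmonoid E) (hdense : IsOrderDense (S : Set E)) {e f : E} (he : 0 ≤ e)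
    (hf : ∀ d ∈ S, d ∈ Set.Icc 0 e → d ≤ f) : e ≤ f := by
  by_contra hef
  obtain ⟨g, hgS, hg0, hg⟩ := hdense (e - e ⊓ f) (sub_pos.mpr (inf_lt_left.mpr hef))
  exact hg0.not_ge (arch g e (nsmul_le_of_forall_mem_Icc_le S he hf hgS hg0.le hg))

theorem HasBProperty.isMajorizing (arch : ∀ x y : E, (∀ n : ℕ, n • x ≤ y) → x ≤ 0)
    (S : AddSubmonoid E) (hsup : ∀ x ∈ S, ∀ y ∈ S, x ⊔ y ∈ S)
    (hdense : IsOrderDense (S : Set E)) (hb : HasBProperty (S : Set E)) :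
    IsMajorizing (S : Set E) := by
  intro e he
  set D : Set E := S ∩ Set.Icc 0 e
  have : Nonempty D := ⟨⟨0, S.zero_mem, le_rfl, he⟩⟩
  have : IsDirected D (· ≤ ·) := DirectedOn.isDirectedOrder fun a ha b hb ↦
    ⟨a ⊔ b, ⟨hsup a ha.1 b hb.1, ha.2.1.trans le_sup_left, sup_le ha.2.2 hb.2.2⟩,
      le_sup_left, le_sup_right⟩
  obtain ⟨f, hfS, hf⟩ := hb D Subtype.val (fun d ↦ d.2.1) (fun d ↦ d.2.2.1) (Subtype.mono_coe _)
    ⟨e, fun d ↦ d.2.2.2⟩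
  exact ⟨f, hfS, le_of_forall_mem_Icc_le arch S hdense he fun d hdS hd ↦ hf ⟨d, hdS, hd⟩⟩

end

/-- For an order dense sublattice `F` of a vector lattice `E`, the b-property in `E`
is equivalent to `F` being majorizing in `E`. -/
theorem order_dense_b_property_iff_majorizing
    {E : Type u} [AddCommGroup E] [Lattice E]
    [CovariantClass E E (· + ·) (· ≤ ·)] [Module ℝ E]
    (arch : ∀ x y : E, (∀ n : ℕ, n • x ≤ y) → x ≤ 0)
    (F : Submodule ℝ E) (hFlat : ∀ x ∈ F, ∀ y ∈ F, x ⊔ y ∈ F)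
    (hdense : ∀ e : E, 0 < e → ∃ f ∈ F, 0 < f ∧ f ≤ e) :
    (∀ (ι : Type u) [Preorder ι] [Nonempty ι] [IsDirected ι (· ≤ ·)] (x : ι → E),
        (∀ i, x i ∈ F) → (∀ i, 0 ≤ x i) → Monotone x →
        (∃ e : E, ∀ i, x i ≤ e) → ∃ f ∈ F, ∀ i, x i ≤ f)
      ↔ (∀ e : E, 0 ≤ e → ∃ f ∈ F, e ≤ f) :=
  ⟨HasBProperty.isMajorizing arch F.toAddSubmonoid hFlat hdense,
    IsMajorizing.hasBProperty (S := (F : Set E))⟩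
end
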